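/- arXiv:2403.07524 — 9 statements merged into one kernel-verified Lean document; each statement's English description precedes it below -/
import Mathlib

section
/- Let G be a finite simple graph, U ⊆ V(G), and let σ, ρ ⊆ ℕ each be contained in a single residue class modulo m ≥ 2 (say all elements of σ are ≡ s mod m and all elements of ρ are ≡ r mod m). Let S_x, S_y ⊆ V(G) be partial solutions with respect to U. Then the number of ordered pairs (u,v) with u ∈ S_x, v ∈ S_y, {u,v} ∈ E(G) satisfies |E(S_x → S_y)| ≡ r·|S_x \ (S_y ∪ U)| + s·|(S_x ∩ S_y) \ U| + Σ_{v ∈ U ∩ S_x} |N(v) ∩ S_y| (mod m). -/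
/-- A partial solution with respect to a portal set `U`. -/
def IsPartialSol {V : Type*} [Fintype V] [DecidableEq V] (G : SimpleGraph V)
    [DecidableRel G.Adj] (U : Finset V) (σ ρ : Set ℕ) (S : Finset V) : Prop :=
  (∀ v ∈ S, v ∉ U → (G.neighborFinset v ∩ S).card ∈ σ) ∧
  (∀ v ∉ S, v ∉ U → (G.neighborFinset v ∩ S).card ∈ ρ)

theorem stmt1 {V : Type*} [Fintype V] [DecidableEq V] (G : SimpleGraph V) [DecidableRel G.Adj]
    (U : Finset V) (m s r : ℕ) (hm : 2 ≤ m)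
    (σ ρ : Set ℕ)
    (hσ : ∀ c ∈ σ, c % m = s % m) (hρ : ∀ c ∈ ρ, c % m = r % m)
    (Sx Sy : Finset V)
    (hx : IsPartialSol G U σ ρ Sx) (hy : IsPartialSol G U σ ρ Sy) :
    ((Sx ×ˢ Sy).filter (fun p => G.Adj p.1 p.2)).card ≡
      r * (Sx \ (Sy ∪ U)).card + s * ((Sx ∩ Sy) \ U).card +
        ∑ v ∈ U ∩ Sx, (G.neighborFinset v ∩ Sy).card [MOD m] := by
  set f : V → ℕ := fun u => (G.neighborFinset u ∩ Sy).card with hf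
  have hcard : ((Sx ×ˢ Sy).filter (fun p => G.Adj p.1 p.2)).card = ∑ u ∈ Sx, f u := by
    rw [Finset.card_filter, Finset.sum_product]
    refine Finset.sum_congr rfl fun u _ => ?_
    rw [← Finset.card_filter]
    congr 1
    ext y
    simp [hf, and_comm]
  set A := Sx \ (Sy ∪ U) with hA
  set B := (Sx ∩ Sy) \ U with hB
  set C := U ∩ Sx with hC
  have hsplit : ∑ u ∈ Sx, f u = ∑ u ∈ A, f u + ∑ u ∈ B, f u + ∑ u ∈ C, f u := by
    have hdAB : Disjoint A B := by
      rw [Finset.disjoint_left]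
      intro a ha hb
      simp [hA, hB] at ha hb
      tauto
    have hdABC : Disjoint (A ∪ B) C := by
      rw [Finset.disjoint_left]
      intro a ha hc
      simp [hA, hB, hC] at ha hc
      tauto
    have hun : A ∪ B ∪ C = Sx := by
      ext a
      simp only [hA, hB, hC, Finset.mem_union, Finset.mem_sdiff, Finset.mem_inter]
      tauto
    rw [← hun, Finset.sum_union hdABC, Finset.sum_union hdAB]
  rw [hcard, hsplit]
  have h1 : ∑ u ∈ A, f u ≡ r * A.card [MOD m] := by
    have heq : ∀ u ∈ A, ((f u : ZMod m)) = (r : ZMod m) := by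
      intro u hu
      rw [hA, Finset.mem_sdiff, Finset.mem_union] at hu
      push_neg at hu
      exact (ZMod.natCast_eq_natCast_iff _ _ _).mpr (hρ _ (hy.2 u hu.2.1 hu.2.2))
    rw [← ZMod.natCast_eq_natCast_iff]
    push_cast
    rw [Finset.sum_congr rfl heq, Finset.sum_const, nsmul_eq_mul, mul_comm]
  have h2 : ∑ u ∈ B, f u ≡ s * B.card [MOD m] := by
    have heq : ∀ u ∈ B, ((f u : ZMod m)) = (s : ZMod m) := by
      intro u hu
      rw [hB, Finset.mem_sdiff, Finset.mem_inter] at hu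
      exact (ZMod.natCast_eq_natCast_iff _ _ _).mpr (hσ _ (hy.1 u hu.1.2 hu.2))
    rw [← ZMod.natCast_eq_natCast_iff]
    push_cast
    rw [Finset.sum_congr rfl heq, Finset.sum_const, nsmul_eq_mul, mul_comm]
  exact (h1.add h2).add (Nat.ModEq.refl _)
end

section
/- Let G be a finite simple graph, U ⊆ V(G), and let σ, ρ ⊆ ℕ each be contained in a single residue class modulo m ≥ 2. Let S_x, S_y ⊆ V(G) be two partial solutions with respect to U such that |S_x \ U| ≡ |S_y \ U| (mod m). Define for each z ∈ {x,y} the selection vector s_z ∈ {0,1}^U by s_z[v] = 1 iff v ∈ S_z, and the weight vector d_z ∈ ℕ^U by d_z[v] = |N(v) ∩ S_z|. Then s_x · d_y ≡ s_y · d_x (mod m), where · denotes the dot product over U. -/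
theorem stmt2 {V : Type*} [Fintype V] [DecidableEq V] (G : SimpleGraph V) [DecidableRel G.Adj]
    (U : Finset V) (m s r : ℕ) (hm : 2 ≤ m)
    (σ ρ : Set ℕ)
    (hσ : ∀ c ∈ σ, c % m = s % m) (hρ : ∀ c ∈ ρ, c % m = r % m)
    (Sx Sy : Finset V)
    (hx : IsPartialSol G U σ ρ Sx) (hy : IsPartialSol G U σ ρ Sy)
    (hsize : (Sx \ U).card ≡ (Sy \ U).card [MOD m]) :
    (∑ v ∈ U, (if v ∈ Sx then 1 else 0) * (G.neighborFinset v ∩ Sy).card) ≡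
      (∑ v ∈ U, (if v ∈ Sy then 1 else 0) * (G.neighborFinset v ∩ Sx).card) [MOD m] := by
  classical
  set dX : V → ℕ := fun v => (G.neighborFinset v ∩ Sx).card with hdX
  set dY : V → ℕ := fun v => (G.neighborFinset v ∩ Sy).card with hdY
  -- rewrite the two sums as sums over Sx ∩ U and Sy ∩ U
  have hL : (∑ v ∈ U, (if v ∈ Sx then 1 else 0) * dY v) = ∑ v ∈ Sx ∩ U, dY v := by
    rw [Finset.inter_comm, ← Finset.sum_ite_mem]
    exact Finset.sum_congr rfl fun v _ => by by_cases h : v ∈ Sx <;> simp [h]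
  have hR : (∑ v ∈ U, (if v ∈ Sy then 1 else 0) * dX v) = ∑ v ∈ Sy ∩ U, dX v := by
    rw [Finset.inter_comm, ← Finset.sum_ite_mem]
    exact Finset.sum_congr rfl fun v _ => by by_cases h : v ∈ Sy <;> simp [h]
  rw [hL, hR]
  -- total symmetry
  have card_eq : ∀ (v : V) (B : Finset V),
      (G.neighborFinset v ∩ B).card = ∑ w ∈ B, (if G.Adj v w then 1 else 0) := by
    intro v B
    rw [← Finset.card_filter]
    congr 1
    ext w
    simp [SimpleGraph.mem_neighborFinset, and_comm]
  have totsym : (∑ v ∈ Sx, dY v) = ∑ v ∈ Sy, dX v := by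
    simp only [hdX, hdY, card_eq]
    rw [Finset.sum_comm]
    exact Finset.sum_congr rfl fun v _ => Finset.sum_congr rfl fun w _ => by simp [G.adj_comm]
  have splitX : (∑ v ∈ Sx ∩ U, dY v) + ∑ v ∈ Sx \ U, dY v = ∑ v ∈ Sx, dY v :=
    Finset.sum_inter_add_sum_sdiff Sx U dY
  have splitY : (∑ v ∈ Sy ∩ U, dX v) + ∑ v ∈ Sy \ U, dX v = ∑ v ∈ Sy, dX v :=
    Finset.sum_inter_add_sum_sdiff Sy U dX
  -- the off-U sums are congruent mod m
  have hmodX : (∑ v ∈ Sx \ U, dY v) ≡ ∑ v ∈ Sx \ U, (if v ∈ Sy then s else r) [MOD m] := by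
    unfold Nat.ModEq
    rw [Finset.sum_nat_mod, Finset.sum_nat_mod (Sx \ U) m (fun v => if v ∈ Sy then s else r)]
    congr 1
    refine Finset.sum_congr rfl fun v hv => ?_
    obtain ⟨hvx, hvU⟩ := Finset.mem_sdiff.mp hv
    by_cases h : v ∈ Sy
    · simp only [h, if_true]
      exact hσ _ (hy.1 v h hvU)
    · simp only [h, if_false]
      exact hρ _ (hy.2 v h hvU)
  have hmodY : (∑ v ∈ Sy \ U, dX v) ≡ ∑ v ∈ Sy \ U, (if v ∈ Sx then s else r) [MOD m] := by
    unfold Nat.ModEq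
    rw [Finset.sum_nat_mod, Finset.sum_nat_mod (Sy \ U) m (fun v => if v ∈ Sx then s else r)]
    congr 1
    refine Finset.sum_congr rfl fun v hv => ?_
    obtain ⟨hvy, hvU⟩ := Finset.mem_sdiff.mp hv
    by_cases h : v ∈ Sx
    · simp only [h, if_true]
      exact hσ _ (hx.1 v h hvU)
    · simp only [h, if_false]
      exact hρ _ (hx.2 v h hvU)
  -- evaluate the constant sums
  have hax : ((Sx \ U).filter (· ∈ Sy)) = (Sx ∩ Sy) \ U := by
    ext v; simp [Finset.mem_filter, Finset.mem_sdiff, Finset.mem_inter]; tauto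
  have hay : ((Sy \ U).filter (· ∈ Sx)) = (Sx ∩ Sy) \ U := by
    ext v; simp [Finset.mem_filter, Finset.mem_sdiff, Finset.mem_inter]; tauto
  set a : ℕ := ((Sx ∩ Sy) \ U).card with ha
  set bx : ℕ := ((Sx \ U).filter (· ∉ Sy)).card with hbx
  set by' : ℕ := ((Sy \ U).filter (· ∉ Sx)).card with hby
  have hsumx : (∑ v ∈ Sx \ U, (if v ∈ Sy then s else r)) = a * s + bx * r := by
    rw [Finset.sum_ite, Finset.sum_const, Finset.sum_const, hax, smul_eq_mul, smul_eq_mul]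
  have hsumy : (∑ v ∈ Sy \ U, (if v ∈ Sx then s else r)) = a * s + by' * r := by
    rw [Finset.sum_ite, Finset.sum_const, Finset.sum_const, hay, smul_eq_mul, smul_eq_mul]
  have hcardx : a + bx = (Sx \ U).card := by
    rw [ha, ← hax]; exact Finset.card_filter_add_card_filter_not _
  have hcardy : a + by' = (Sy \ U).card := by
    rw [ha, ← hay]; exact Finset.card_filter_add_card_filter_not _
  have hb : bx ≡ by' [MOD m] := by
    have : a + bx ≡ a + by' [MOD m] := by rw [hcardx, hcardy]; exact hsize
    exact Nat.ModEq.add_left_cancel' a this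
  have hoff : (∑ v ∈ Sx \ U, dY v) ≡ ∑ v ∈ Sy \ U, dX v [MOD m] := by
    calc (∑ v ∈ Sx \ U, dY v) ≡ a * s + bx * r [MOD m] := hmodX.trans (by rw [hsumx])
      _ ≡ a * s + by' * r [MOD m] := Nat.ModEq.add_left _ (hb.mul_right r)
      _ ≡ ∑ v ∈ Sy \ U, dX v [MOD m] := (hmodY.trans (by rw [hsumy])).symm
  have heq : (∑ v ∈ Sx ∩ U, dY v) + ∑ v ∈ Sx \ U, dY v
      = (∑ v ∈ Sy ∩ U, dX v) + ∑ v ∈ Sy \ U, dX v := by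
    rw [splitX, splitY, totsym]
  exact Nat.ModEq.add_right_cancel hoff (heq ▸ Nat.ModEq.refl _)
end

section
/- Fix m ≥ 2. Let L be a sparse family of pairs (s,d) with s ∈ {0,1}^n, d ∈ (ℤ/m)^n (sparse meaning s_x·d_y ≡ s_y·d_x mod m for all pairs of elements), and let S be a σ-defining set for the set {s : (s,d) ∈ L} of selection vectors. Let S̄ = {1,…,n} \ S. Then for any two elements (s,d_x), (s,d_y) ∈ L with the same selection vector s, if d_x and d_y agree on all positions of S̄, then d_x = d_y. -/
/-- A family of (selection vector, weight vector) pairs is sparse if the cross dot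
products agree modulo `m`. -/
def Sparse {n m : ℕ} (L : Set ((Fin n → ZMod m) × (Fin n → ZMod m))) : Prop :=
  ∀ x ∈ L, ∀ y ∈ L, (∑ i, x.1 i * y.2 i) = (∑ i, y.1 i * x.2 i)

theorem stmt6 {n m : ℕ} (hm : 2 ≤ m)
    (L : Set ((Fin n → ZMod m) × (Fin n → ZMod m)))
    (h01 : ∀ p ∈ L, ∀ i, p.1 i = 0 ∨ p.1 i = 1)
    (hL : Sparse L)
    (S : Finset (Fin n))
    (hinj : ∀ p ∈ L, ∀ q ∈ L, (∀ i ∈ S, p.1 i = q.1 i) → p.1 = q.1)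
    (hmin : ∀ i ∈ S, ¬ (∀ p ∈ L, ∀ q ∈ L, (∀ j ∈ S.erase i, p.1 j = q.1 j) → p.1 = q.1))
    (s dx dy : Fin n → ZMod m)
    (hx : (s, dx) ∈ L) (hy : (s, dy) ∈ L)
    (hagree : ∀ i ∉ S, dx i = dy i) :
    dx = dy := by
  have key : ∀ i ∈ S, dx i = dy i := by
    intro i hi
    have h := hmin i hi
    push_neg at h
    obtain ⟨p, hp, q, hq, hagr, hne⟩ := h
    -- for any r ∈ L, ∑ r.1 j * dx j = ∑ r.1 j * dy j
    have hdot : ∀ r ∈ L, (∑ j, r.1 j * dx j) = (∑ j, r.1 j * dy j) := by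
      intro r hr
      have h1 := hL r hr (s, dx) hx
      have h2 := hL r hr (s, dy) hy
      simp only at h1 h2
      rw [h1, h2]
    have hzero : (∑ j, (p.1 j - q.1 j) * (dx j - dy j)) = 0 := by
      have : (∑ j, (p.1 j - q.1 j) * (dx j - dy j)) =
          ((∑ j, p.1 j * dx j) - (∑ j, p.1 j * dy j)) -
          ((∑ j, q.1 j * dx j) - (∑ j, q.1 j * dy j)) := by
        rw [← Finset.sum_sub_distrib, ← Finset.sum_sub_distrib, ← Finset.sum_sub_distrib]
        exact Finset.sum_congr rfl fun j _ => by ring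
      rw [this, hdot p hp, hdot q hq, sub_self, sub_self, sub_self]
    have hsingle : (∑ j, (p.1 j - q.1 j) * (dx j - dy j)) =
        (p.1 i - q.1 i) * (dx i - dy i) := by
      refine Finset.sum_eq_single i (fun j _ hj => ?_) (by simp)
      by_cases hjS : j ∈ S
      · rw [hagr j (Finset.mem_erase.mpr ⟨hj, hjS⟩), sub_self, zero_mul]
      · rw [hagree j hjS, sub_self, mul_zero]
    have hpi : p.1 i ≠ q.1 i := by
      intro heq
      apply hne
      refine hinj p hp q hq fun j hjS => ?_
      by_cases hji : j = i
      · rw [hji]; exact heq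
      · exact hagr j (Finset.mem_erase.mpr ⟨hji, hjS⟩)
    have hprod : (p.1 i - q.1 i) * (dx i - dy i) = 0 := by rw [← hsingle, hzero]
    have hsub : dx i - dy i = 0 := by
      rcases h01 p hp i with hp0 | hp0 <;> rcases h01 q hq i with hq0 | hq0 <;>
        rw [hp0, hq0] at hprod hpi
      · exact absurd rfl hpi
      · rw [zero_sub, neg_mul, neg_eq_zero, one_mul] at hprod; exact hprod
      · rw [sub_zero, one_mul] at hprod; exact hprod
      · exact absurd rfl hpi
    exact sub_eq_zero.mp hsub
  funext i
  by_cases hiS : i ∈ S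
  · exact key i hiS
  · exact hagree i hiS
end

section
/- Fix m ≥ 2. Every sparse family L of pairs (s,d) with s ∈ {0,1}^n and d ∈ (ℤ/m)^n, where distinct elements of L are distinct as pairs, satisfies |L| ≤ m^n. More precisely, if S is a σ-defining set for the set of selection vectors of L, then |L| ≤ 2^{|S|} · m^{n−|S|} ≤ m^n. -/
/-- A family of (selection vector, weight vector) pairs is sparse if the cross dot
products agree modulo `m`. -/
def SparseF {n m : ℕ} (L : Finset ((Fin n → ZMod m) × (Fin n → ZMod m))) : Prop :=
  ∀ x ∈ L, ∀ y ∈ L, (∑ i, x.1 i * y.2 i) = (∑ i, y.1 i * x.2 i)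

theorem stmt7 {n m : ℕ} (hm : 2 ≤ m)
    (L : Finset ((Fin n → ZMod m) × (Fin n → ZMod m)))
    (h01 : ∀ p ∈ L, ∀ i, p.1 i = 0 ∨ p.1 i = 1)
    (hL : SparseF L)
    (S : Finset (Fin n))
    (hinj : ∀ p ∈ L, ∀ q ∈ L, (∀ i ∈ S, p.1 i = q.1 i) → p.1 = q.1)
    (hmin : ∀ i ∈ S, ¬ (∀ p ∈ L, ∀ q ∈ L, (∀ j ∈ S.erase i, p.1 j = q.1 j) → p.1 = q.1)) :
    L.card ≤ 2 ^ S.card * m ^ (n - S.card) ∧ 2 ^ S.card * m ^ (n - S.card) ≤ m ^ n := by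
  haveI : NeZero m := ⟨by omega⟩
  haveI : Fact (1 < m) := ⟨by omega⟩
  have hSn : S.card ≤ n := by
    simpa using Finset.card_le_univ S
  constructor
  · -- injective map into (S → Bool) × (Sᶜ → ZMod m)
    set f : ((Fin n → ZMod m) × (Fin n → ZMod m)) →
        (({x // x ∈ S} → Bool) × ({x // x ∈ Sᶜ} → ZMod m)) :=
      fun p => (fun i => decide (p.1 i.1 = 1), fun i => p.2 i.1) with hf
    have hinjf : Set.InjOn f L := by
      intro p hp q hq hpq
      have h1 : p.1 = q.1 := by
        apply hinj p hp q hq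
        intro i hi
        have := congrFun (congrArg Prod.fst hpq) ⟨i, hi⟩
        simp only [f, decide_eq_decide] at this
        rcases h01 p hp i with h | h <;> rcases h01 q hq i with h' | h' <;>
          simp [h, h'] at this ⊢
      have h2c : ∀ i ∉ S, p.2 i = q.2 i := by
        intro i hi
        have := congrFun (congrArg Prod.snd hpq) ⟨i, by simpa using hi⟩
        simpa [f] using this
      -- the difference e := p.2 - q.2 is orthogonal to every selection vector in L
      have horth : ∀ r ∈ L, (∑ j, r.1 j * (p.2 j - q.2 j)) = 0 := by
        intro r hr
        have e1 := hL r hr p hp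
        have e2 := hL r hr q hq
        rw [h1] at e1
        have : (∑ j, r.1 j * p.2 j) = (∑ j, r.1 j * q.2 j) := by rw [e1, e2]
        calc (∑ j, r.1 j * (p.2 j - q.2 j))
            = (∑ j, r.1 j * p.2 j) - (∑ j, r.1 j * q.2 j) := by
              rw [← Finset.sum_sub_distrib]; congr 1; ext j; ring
          _ = 0 := by rw [this, sub_self]
      have h2 : ∀ i ∈ S, p.2 i = q.2 i := by
        intro i hi
        obtain ⟨r, hr, s, hs, hagree, hneq⟩ : ∃ r ∈ L, ∃ s ∈ L,
            (∀ j ∈ S.erase i, r.1 j = s.1 j) ∧ r.1 ≠ s.1 := by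
          have := hmin i hi
          push_neg at this
          obtain ⟨r, hr, s, hs, h1, h2⟩ := this
          exact ⟨r, hr, s, hs, h1, h2⟩
        have hri : r.1 i ≠ s.1 i := by
          intro hcontra
          apply hneq
          apply hinj r hr s hs
          intro j hj
          rcases eq_or_ne j i with rfl | hji
          · exact hcontra
          · exact hagree j (Finset.mem_erase.mpr ⟨hji, hj⟩)
        have hsum : ((r.1 i - s.1 i) * (p.2 i - q.2 i)) = 0 := by
          have key : (∑ j, (r.1 j - s.1 j) * (p.2 j - q.2 j)) = 0 := by
            have := horth r hr
            have := horth s hs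
            calc (∑ j, (r.1 j - s.1 j) * (p.2 j - q.2 j))
                = (∑ j, r.1 j * (p.2 j - q.2 j)) - (∑ j, s.1 j * (p.2 j - q.2 j)) := by
                  rw [← Finset.sum_sub_distrib]; congr 1; ext j; ring
              _ = 0 := by rw [horth r hr, horth s hs, sub_self]
          rw [← key]
          symm
          apply Finset.sum_eq_single i
          · intro j _ hji
            by_cases hjS : j ∈ S
            · rw [hagree j (Finset.mem_erase.mpr ⟨hji, hjS⟩), sub_self, zero_mul]
            · rw [h2c j hjS, sub_self, mul_zero]
          · intro h; exact absurd (Finset.mem_univ i) h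
        have hunit : r.1 i - s.1 i = 1 ∨ r.1 i - s.1 i = -1 := by
          rcases h01 r hr i with h | h <;> rcases h01 s hs i with h' | h' <;>
            simp [h, h'] at hri ⊢
        have : p.2 i - q.2 i = 0 := by
          rcases hunit with h | h <;> rw [h] at hsum
          · simpa using hsum
          · have : -(p.2 i - q.2 i) = 0 := by simpa using hsum
            linear_combination -this
        exact sub_eq_zero.mp this
      have h2' : p.2 = q.2 := by
        funext i
        by_cases hiS : i ∈ S
        · exact h2 i hiS
        · exact h2c i hiS
      exact Prod.ext h1 h2'
    have := Finset.card_le_card_of_injOn f (fun p _ => Finset.mem_univ (f p)) hinjf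
    calc L.card ≤ (Finset.univ : Finset (({x // x ∈ S} → Bool) × ({x // x ∈ Sᶜ} → ZMod m))).card := this
      _ = 2 ^ S.card * m ^ (n - S.card) := by
          simp [Finset.card_univ, Fintype.card_prod, Fintype.card_fun, ZMod.card,
            Finset.card_compl]
  · calc 2 ^ S.card * m ^ (n - S.card) ≤ m ^ S.card * m ^ (n - S.card) := by
          exact Nat.mul_le_mul_right _ (Nat.pow_le_pow_left hm _)
      _ = m ^ n := by rw [← pow_add]; congr 1; omega
end

section
/- Fix m ≥ 2 and a sparse family L of pairs in {0,1}^n × (ℤ/m)^n. Let S be a σ-defining set for the selection vectors of L with witness vectors w_{1,ℓ}, w_{0,ℓ} for each ℓ ∈ S (all taken among selection vectors of L). For vectors u, o ∈ (ℤ/m)^n define the remainder at position ℓ ∈ S as rem(u,o)[ℓ] = Σ_{i ∈ S̄} (u[i] − o[i])·(w_{1,ℓ}[i] − w_{0,ℓ}[i]). Then for any two elements (s, u), (s, o) ∈ L with the same selection vector s, and any ℓ ∈ S, we have u[ℓ] ≡ o[ℓ] − rem(u,o)[ℓ] (mod m). -/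
/-- The remainder vector of `u` relative to the origin `o`, with witness vectors
`w₁ w₀` and `σ`-defining set `S`. -/
def remVec {n m : ℕ} (S : Finset (Fin n)) (w₁ w₀ : Fin n → (Fin n → ZMod m))
    (u o : Fin n → ZMod m) (ℓ : Fin n) : ZMod m :=
  ∑ i ∈ Sᶜ, (u i - o i) * (w₁ ℓ i - w₀ ℓ i)

theorem stmt8 {n m : ℕ} (hm : 2 ≤ m)
    (L : Set ((Fin n → ZMod m) × (Fin n → ZMod m)))
    (h01 : ∀ p ∈ L, ∀ i, p.1 i = 0 ∨ p.1 i = 1)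
    (hL : Sparse L)
    (S : Finset (Fin n))
    (hinj : ∀ p ∈ L, ∀ q ∈ L, (∀ i ∈ S, p.1 i = q.1 i) → p.1 = q.1)
    (w₁ w₀ : Fin n → (Fin n → ZMod m))
    (hw : ∀ ℓ ∈ S, (∃ d, (w₁ ℓ, d) ∈ L) ∧ (∃ d, (w₀ ℓ, d) ∈ L) ∧
      (∀ j ∈ S.erase ℓ, w₁ ℓ j = w₀ ℓ j) ∧ w₁ ℓ ℓ = 1 ∧ w₀ ℓ ℓ = 0)
    (s u o : Fin n → ZMod m)
    (hu : (s, u) ∈ L) (ho : (s, o) ∈ L) :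
    ∀ ℓ ∈ S, u ℓ = o ℓ - remVec S w₁ w₀ u o ℓ := by
  intro ℓ hℓ
  obtain ⟨⟨d₁, hd₁⟩, ⟨d₀, hd₀⟩, hagree, h1, h0⟩ := hw ℓ hℓ
  have e1 := hL _ hd₁ _ hu
  have e2 := hL _ hd₁ _ ho
  have e3 := hL _ hd₀ _ hu
  have e4 := hL _ hd₀ _ ho
  simp only at e1 e2 e3 e4
  have key : ∑ i, (w₁ ℓ i - w₀ ℓ i) * (u i - o i) = 0 := by
    simp only [sub_mul, mul_sub, Finset.sum_sub_distrib]
    linear_combination e1 - e2 - e3 + e4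
  have hS : ∑ i ∈ S, (w₁ ℓ i - w₀ ℓ i) * (u i - o i) = u ℓ - o ℓ := by
    rw [Finset.sum_eq_single_of_mem ℓ hℓ]
    · rw [h1, h0]; ring
    · intro j hj hne
      rw [hagree j (Finset.mem_erase.mpr ⟨hne, hj⟩)]; ring
  have hfin : (u ℓ - o ℓ) + remVec S w₁ w₀ u o ℓ = 0 := by
    rw [← hS]
    unfold remVec
    rw [show (∑ i ∈ Sᶜ, (u i - o i) * (w₁ ℓ i - w₀ ℓ i))
        = ∑ i ∈ Sᶜ, (w₁ ℓ i - w₀ ℓ i) * (u i - o i) from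
      Finset.sum_congr rfl fun i _ => mul_comm _ _]
    rw [Finset.sum_add_sum_compl]
    exact key
  linear_combination hfin
end

section
/- Fix m ≥ 2 and a sparse family L in {0,1}^n × (ℤ/m)^n with σ-defining set S for the selection vectors and associated witness vectors. Define the compression of a weight vector u as its restriction u|_{S̄} to positions S̄ = {1,…,n} \ S, and define decompression relative to an origin vector o by dec_o(a)[ℓ] = a[ℓ] for ℓ ∈ S̄ and dec_o(a)[ℓ] = o[ℓ] − rem(a,o)[ℓ] mod m for ℓ ∈ S, where rem(a,o)[ℓ] = Σ_{i∈S̄}(a[i]−o[i])(w_{1,ℓ}[i]−w_{0,ℓ}[i]). Then for any fixed selection vector s, any (s,o) ∈ L, and any (s,u) ∈ L, we have dec_o(u|_{S̄}) = u. -/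
/-- Decompression relative to an origin vector `o`: positions outside `S` are kept,
positions in `S` are reconstructed via the remainder. -/
def decompress {n m : ℕ} [DecidableEq (Fin n)] (S : Finset (Fin n))
    (w₁ w₀ : Fin n → (Fin n → ZMod m)) (o a : Fin n → ZMod m) : Fin n → ZMod m :=
  fun ℓ => if ℓ ∈ S then o ℓ - remVec S w₁ w₀ a o ℓ else a ℓ

theorem stmt9 {n m : ℕ} (hm : 2 ≤ m)
    (L : Set ((Fin n → ZMod m) × (Fin n → ZMod m)))
    (h01 : ∀ p ∈ L, ∀ i, p.1 i = 0 ∨ p.1 i = 1)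
    (hL : Sparse L)
    (S : Finset (Fin n))
    (hinj : ∀ p ∈ L, ∀ q ∈ L, (∀ i ∈ S, p.1 i = q.1 i) → p.1 = q.1)
    (w₁ w₀ : Fin n → (Fin n → ZMod m))
    (hw : ∀ ℓ ∈ S, (∃ d, (w₁ ℓ, d) ∈ L) ∧ (∃ d, (w₀ ℓ, d) ∈ L) ∧
      (∀ j ∈ S.erase ℓ, w₁ ℓ j = w₀ ℓ j) ∧ w₁ ℓ ℓ = 1 ∧ w₀ ℓ ℓ = 0)
    (s u o : Fin n → ZMod m)
    (hu : (s, u) ∈ L) (ho : (s, o) ∈ L) :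
    decompress S w₁ w₀ o u = u := by
  funext ℓ
  unfold decompress
  split_ifs with hℓ
  · obtain ⟨⟨d₁, h1⟩, ⟨d₀, h0⟩, hSe, hw1, hw0⟩ := hw ℓ hℓ
    have e1 : (∑ i, w₁ ℓ i * u i) = ∑ i, w₁ ℓ i * o i := by
      rw [hL _ h1 _ hu, hL _ h1 _ ho]
    have e0 : (∑ i, w₀ ℓ i * u i) = ∑ i, w₀ ℓ i * o i := by
      rw [hL _ h0 _ hu, hL _ h0 _ ho]
    have key : (∑ i, (u i - o i) * (w₁ ℓ i - w₀ ℓ i)) = 0 := by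
      have expand : (∑ i, (u i - o i) * (w₁ ℓ i - w₀ ℓ i)) =
          ((∑ i, w₁ ℓ i * u i) - (∑ i, w₁ ℓ i * o i)) -
          ((∑ i, w₀ ℓ i * u i) - (∑ i, w₀ ℓ i * o i)) := by
        simp only [← Finset.sum_sub_distrib]
        apply Finset.sum_congr rfl
        intros; ring
      rw [expand, e1, e0]; ring
    have hsplit : (∑ i ∈ S, (u i - o i) * (w₁ ℓ i - w₀ ℓ i)) +
        (∑ i ∈ Sᶜ, (u i - o i) * (w₁ ℓ i - w₀ ℓ i)) =
        ∑ i, (u i - o i) * (w₁ ℓ i - w₀ ℓ i) :=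
      Finset.sum_add_sum_compl S _
    have hS : (∑ i ∈ S, (u i - o i) * (w₁ ℓ i - w₀ ℓ i)) = u ℓ - o ℓ := by
      rw [Finset.sum_eq_single ℓ]
      · rw [hw1, hw0]; ring
      · intro j hj hne
        rw [hSe j (Finset.mem_erase.mpr ⟨hne, hj⟩)]; ring
      · intro h; exact absurd hℓ h
    have : remVec S w₁ w₀ u o ℓ = o ℓ - u ℓ := by
      unfold remVec
      have := hsplit
      rw [key, hS] at this
      linear_combination this
    rw [this]; ring
  · rfl
end

section
/- For every finite simple graph G there exists a set S ⊆ V(G) such that every vertex v ∈ V(G) satisfies |N[v] ∩ S| is odd, where N[v] denotes the closed neighborhood of v. (Equivalently, every instance of Reflexive-AllOff with all lights initially on has a solution.) -/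
open Finset Matrix

theorem stmt12 {V : Type*} [Fintype V] [DecidableEq V]
    (G : SimpleGraph V) [DecidableRel G.Adj] :
    ∃ S : Finset V, ∀ v : V, Odd ((insert v (G.neighborFinset v) ∩ S).card) := by
  classical
  set F := ZMod 2 with hF
  have two_elem : ∀ a : F, a = 0 ∨ a = 1 := by decide
  have mul_self_eq : ∀ a : F, a * a = a := by decide
  have add_self : ∀ a : F, a + a = 0 := by decide
  let M : Matrix V V F := fun i j => if i = j ∨ G.Adj i j then 1 else 0
  have hsymm : ∀ i j, M i j = M j i := by
    intro i j
    have hiff : (i = j ∨ G.Adj i j) ↔ (j = i ∨ G.Adj j i) := by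
      rw [G.adj_comm, eq_comm]
    simp only [M]
    by_cases h : i = j ∨ G.Adj i j
    · rw [if_pos h, if_pos (hiff.mp h)]
    · rw [if_neg h, if_neg (fun hc => h (hiff.mpr hc))]
  have hdiag : ∀ i, M i i = 1 := fun i => by simp [M]
  -- key step: the all-ones vector is in the range of M
  have key : ∃ x : V → F, M.mulVec x = 1 := by
    have h1 : (1 : V → F) ∈ LinearMap.range M.mulVecLin := by
      rw [← Subspace.forall_mem_dualAnnihilator_apply_eq_zero_iff]
      intro φ hφ
      rw [Submodule.mem_dualAnnihilator] at hφ
      set x : V → F := fun i => φ (Pi.single i 1) with hx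
      have hφeq : ∀ y : V → F, φ y = ∑ i, y i * x i := by
        intro y
        conv_lhs => rw [pi_eq_sum_univ y]
        rw [map_sum]
        refine Finset.sum_congr rfl fun i _ => ?_
        have hsing : (fun j => if i = j then (1 : F) else 0) = Pi.single i 1 := by
          ext j
          simp [Pi.single_apply, eq_comm]
        rw [_root_.map_smul, hsing]
        simp [smul_eq_mul, hx]
      -- M x = 0
      have hMx : M.mulVec x = 0 := by
        funext i
        have h := hφ (M.mulVecLin (Pi.single i 1)) (LinearMap.mem_range_self _ _)
        rw [Matrix.mulVecLin_apply, Matrix.mulVec_single, hφeq] at h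
        simp only [Matrix.mulVec, dotProduct, Pi.zero_apply]
        calc ∑ j, M i j * x j = ∑ j, M j i * 1 * x j := by
              refine Finset.sum_congr rfl fun j _ => ?_
              rw [mul_one, hsymm]
        _ = 0 := h
      -- x ⬝ M x = 0, expand as a double sum over pairs
      have hquad : ∑ p ∈ (Finset.univ ×ˢ Finset.univ : Finset (V × V)),
          x p.1 * (M p.1 p.2 * x p.2) = 0 := by
        rw [Finset.sum_product]
        calc ∑ i, ∑ j, x i * (M i j * x j)
            = ∑ i, x i * M.mulVec x i := by
              refine Finset.sum_congr rfl fun i _ => ?_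
              rw [Matrix.mulVec, dotProduct, Finset.mul_sum]
          _ = 0 := by rw [hMx]; simp
      rw [← Finset.diag_union_offDiag,
        Finset.sum_union (Finset.disjoint_diag_offDiag _), Finset.sum_diag] at hquad
      -- the off-diagonal part cancels in characteristic 2
      have hoff : ∑ p ∈ (Finset.univ : Finset V).offDiag,
          x p.1 * (M p.1 p.2 * x p.2) = 0 := by
        refine Finset.sum_involution (fun a _ => a.swap) ?_ ?_ ?_ ?_
        · intro a _
          have : x a.swap.1 * (M a.swap.1 a.swap.2 * x a.swap.2)
              = x a.1 * (M a.1 a.2 * x a.2) := by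
            rw [Prod.fst_swap, Prod.snd_swap, hsymm a.2 a.1]; ring
          rw [this, add_self]
        · intro a ha _
          rw [Finset.mem_offDiag] at ha
          intro hcon
          exact ha.2.2 ((Prod.ext_iff.mp hcon).1.symm)
        · intro a ha
          rw [Finset.mem_offDiag] at ha ⊢
          exact ⟨Finset.mem_univ _, Finset.mem_univ _, fun h => ha.2.2 h.symm⟩
        · intro a _
          exact Prod.swap_swap a
      -- the diagonal part is ∑ x i
      have hdiagsum : ∑ i, x i * (M i i * x i) = ∑ i, x i := by
        refine Finset.sum_congr rfl fun i _ => ?_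
        rw [hdiag, one_mul, mul_self_eq]
      rw [hoff, add_zero, hdiagsum] at hquad
      rw [hφeq]
      simpa using hquad
    obtain ⟨x, hxx⟩ := h1
    exact ⟨x, by rwa [Matrix.mulVecLin_apply] at hxx⟩
  obtain ⟨x, hMx⟩ := key
  set S : Finset V := Finset.univ.filter (fun v => x v = 1) with hS
  refine ⟨S, fun v => ?_⟩
  have hval : (((insert v (G.neighborFinset v) ∩ S).card : ℕ) : F) = 1 := by
    have hv := congrFun hMx v
    rw [Matrix.mulVec, dotProduct] at hv
    have step1 : ∑ j, M v j * x j = ∑ j ∈ insert v (G.neighborFinset v), x j := by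
      calc ∑ j, M v j * x j
          = ∑ j ∈ Finset.univ, (if j ∈ insert v (G.neighborFinset v) then x j else 0) := by
            refine Finset.sum_congr rfl fun j _ => ?_
            simp only [M, Finset.mem_insert, SimpleGraph.mem_neighborFinset]
            by_cases h : v = j ∨ G.Adj v j
            · rw [if_pos h, if_pos (by tauto), one_mul]
            · rw [if_neg h, if_neg (by tauto), zero_mul]
        _ = ∑ j ∈ Finset.univ ∩ insert v (G.neighborFinset v), x j :=
            Finset.sum_ite_mem _ _ _
        _ = ∑ j ∈ insert v (G.neighborFinset v), x j := by rw [Finset.univ_inter]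
    have step2 : ∑ j ∈ insert v (G.neighborFinset v), x j
        = ∑ j ∈ insert v (G.neighborFinset v), (if j ∈ S then (1 : F) else 0) := by
      refine Finset.sum_congr rfl fun j _ => ?_
      by_cases h : x j = 1
      · rw [if_pos (by simp [hS, h]), h]
      · rcases two_elem (x j) with h0 | h1
        · rw [if_neg (by simp [hS, h]), h0]
        · exact absurd h1 h
    rw [step1, step2, Finset.sum_ite_mem, Finset.sum_const, nsmul_eq_mul, mul_one] at hv
    simpa using hv
  rw [Nat.odd_iff]
  rcases Nat.mod_two_eq_zero_or_one ((insert v (G.neighborFinset v) ∩ S).card) with h | h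
  · exfalso
    rw [← ZMod.natCast_mod _ 2, h] at hval
    simp at hval
  · exact h
end

section
/- Let σ = ρ = {odd natural numbers}. Let P₃ be the path on vertices v, w, v̄ (edges vw and wv̄) embedded in a graph G such that w and v̄ have no neighbors outside {v, w, v̄}. Then every (σ,ρ)-set S of G satisfies w ∈ S and exactly one of v, v̄ is in S; in particular |S ∩ {v, w, v̄}| = 2. -/
theorem stmt16 {V : Type*} [Fintype V] [DecidableEq V]
    (G : SimpleGraph V) [DecidableRel G.Adj]
    (v w vb : V) (hvvb : v ≠ vb)
    (hvw : G.Adj v w) (hwvb : G.Adj w vb) (hnadj : ¬ G.Adj v vb)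
    (hwN : ∀ z, G.Adj w z → z = v ∨ z = w ∨ z = vb)
    (hvbN : ∀ z, G.Adj vb z → z = v ∨ z = w ∨ z = vb)
    (S : Finset V)
    (hsol : ∀ u : V, Odd ((G.neighborFinset u ∩ S).card)) :
    w ∈ S ∧ (v ∈ S ↔ vb ∉ S) ∧ (S ∩ ({v, w, vb} : Finset V)).card = 2 := by
  have hvw' : v ≠ w := G.ne_of_adj hvw
  have hwvb' : w ≠ vb := G.ne_of_adj hwvb
  have hNvb : G.neighborFinset vb = {w} := by
    ext z
    simp only [SimpleGraph.mem_neighborFinset, Finset.mem_singleton]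
    constructor
    · intro h
      rcases hvbN z h with rfl | rfl | rfl
      · exact absurd h.symm hnadj
      · rfl
      · exact absurd h (G.irrefl)
    · rintro rfl; exact hwvb.symm
  have hNw : G.neighborFinset w = {v, vb} := by
    ext z
    simp only [SimpleGraph.mem_neighborFinset, Finset.mem_insert, Finset.mem_singleton]
    constructor
    · intro h
      rcases hwN z h with rfl | rfl | rfl
      · exact Or.inl rfl
      · exact absurd h (G.irrefl)
      · exact Or.inr rfl
    · rintro (rfl | rfl)
      · exact hvw.symm
      · exact hwvb
  have hwS : w ∈ S := by
    by_contra h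
    have h1 := hsol vb
    rw [hNvb, Finset.singleton_inter_of_notMem h] at h1
    simp [Nat.odd_iff] at h1
  have hxor : v ∈ S ↔ vb ∉ S := by
    have h1 := hsol w
    rw [hNw] at h1
    constructor
    · intro hv hvb
      have : ({v, vb} : Finset V) ∩ S = {v, vb} := by
        rw [Finset.inter_eq_left]
        intro z hz
        simp at hz
        rcases hz with rfl | rfl <;> assumption
      rw [this, Finset.card_insert_of_notMem (by simp [hvvb]),
        Finset.card_singleton] at h1
      simp [Nat.odd_iff] at h1
    · intro hvb
      by_contra hv
      have : ({v, vb} : Finset V) ∩ S = ∅ := by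
        ext z
        simp only [Finset.mem_inter, Finset.mem_insert, Finset.mem_singleton,
          Finset.notMem_empty, iff_false]
        rintro ⟨rfl | rfl, hz⟩ <;> [exact hv hz; exact hvb hz]
      rw [this, Finset.card_empty] at h1
      simp [Nat.odd_iff] at h1
  refine ⟨hwS, hxor, ?_⟩
  by_cases hv : v ∈ S
  · have hvb : vb ∉ S := hxor.mp hv
    have : S ∩ ({v, w, vb} : Finset V) = {v, w} := by
      ext z
      simp only [Finset.mem_inter, Finset.mem_insert, Finset.mem_singleton]
      constructor
      · rintro ⟨hz, rfl | rfl | rfl⟩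
        · exact Or.inl rfl
        · exact Or.inr rfl
        · exact absurd hz hvb
      · rintro (rfl | rfl) <;> simp_all
    rw [this, Finset.card_insert_of_notMem (by simp [hvw']), Finset.card_singleton]
  · have hvb : vb ∈ S := by by_contra h; exact hv (hxor.mpr h)
    have : S ∩ ({v, w, vb} : Finset V) = {w, vb} := by
      ext z
      simp only [Finset.mem_inter, Finset.mem_insert, Finset.mem_singleton]
      constructor
      · rintro ⟨hz, rfl | rfl | rfl⟩
        · exact absurd hz hv
        · exact Or.inl rfl
        · exact Or.inr rfl
      · rintro (rfl | rfl) <;> simp_all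
    rw [this, Finset.card_insert_of_notMem (by simp [hwvb']), Finset.card_singleton]
end

section
/- Fix m ≥ 2 and n ≥ 1, and let σ, ρ be residue classes modulo m. Suppose (H₁, U) and (H₂, U) are graphs with the same portal set U (|U| = n) sharing no vertices outside U, and U induces no edges in H₂. Let G be the graph obtained by gluing H₁ and H₂ along U and removing duplicate edges inside U. If S₁ ⊆ V(H₁) and S₂ ⊆ V(H₂) are partial solutions with respect to U with S₁ ∩ U = S₂ ∩ U, then S₁ ∪ S₂ is a partial solution of (G, U) with respect to U, and for every v ∈ U, |N_G(v) ∩ (S₁∪S₂)| = |N_{H₁}(v) ∩ S₁| + |N_{H₂}(v) ∩ S₂|. -/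
theorem stmt19 {V : Type*} [Fintype V] [DecidableEq V]
    (m a b n : ℕ) (hm : 2 ≤ m) (hn : 1 ≤ n) (ha : a < m) (hb : b < m)
    (σ ρ : Set ℕ) (hσ : σ = {k : ℕ | k % m = a}) (hρ : ρ = {k : ℕ | k % m = b})
    (G G₁ G₂ : SimpleGraph V)
    [DecidableRel G.Adj] [DecidableRel G₁.Adj] [DecidableRel G₂.Adj]
    (U A B : Finset V) (hU : U.card = n)
    (hAB : A ∪ B = Finset.univ) (hABU : A ∩ B = U)
    (hG : ∀ x y, G.Adj x y ↔ G₁.Adj x y ∨ G₂.Adj x y)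
    (hG₁ : ∀ x y, G₁.Adj x y → x ∈ A ∧ y ∈ A)
    (hG₂ : ∀ x y, G₂.Adj x y → x ∈ B ∧ y ∈ B)
    (hUindep : ∀ x ∈ U, ∀ y ∈ U, ¬ G₂.Adj x y)
    (S₁ S₂ : Finset V) (hS₁A : S₁ ⊆ A) (hS₂B : S₂ ⊆ B)
    (h₁ : IsPartialSol G₁ U σ ρ S₁) (h₂ : IsPartialSol G₂ U σ ρ S₂)
    (hcap : S₁ ∩ U = S₂ ∩ U) :
    IsPartialSol G U σ ρ (S₁ ∪ S₂) ∧
    ∀ v ∈ U, (G.neighborFinset v ∩ (S₁ ∪ S₂)).card =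
      (G₁.neighborFinset v ∩ S₁).card + (G₂.neighborFinset v ∩ S₂).card := by
  have hUsub : ∀ w, w ∈ A → w ∈ B → w ∈ U := fun w hA hB => by
    rw [← hABU]; exact Finset.mem_inter.mpr ⟨hA, hB⟩
  have hS21 : ∀ w, w ∈ S₂ → w ∈ U → w ∈ S₁ := fun w hw hU' => by
    have : w ∈ S₁ ∩ U := by rw [hcap]; exact Finset.mem_inter.mpr ⟨hw, hU'⟩
    exact (Finset.mem_inter.mp this).1
  have hS12 : ∀ w, w ∈ S₁ → w ∈ U → w ∈ S₂ := fun w hw hU' => by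
    have : w ∈ S₂ ∩ U := by rw [← hcap]; exact Finset.mem_inter.mpr ⟨hw, hU'⟩
    exact (Finset.mem_inter.mp this).1
  have keyA : ∀ v, v ∈ A → v ∉ U →
      G.neighborFinset v ∩ (S₁ ∪ S₂) = G₁.neighborFinset v ∩ S₁ := by
    intro v hvA hvU
    ext w
    simp only [Finset.mem_inter, SimpleGraph.mem_neighborFinset, Finset.mem_union, hG]
    constructor
    · rintro ⟨hadj, hw⟩
      have h1 : G₁.Adj v w := by
        rcases hadj with h | h
        · exact h
        · exact absurd (hUsub v hvA (hG₂ v w h).1) hvU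
      refine ⟨h1, ?_⟩
      rcases hw with h | h
      · exact h
      · exact hS21 w h (hUsub w (hG₁ v w h1).2 (hS₂B h))
    · rintro ⟨h1, h2⟩; exact ⟨Or.inl h1, Or.inl h2⟩
  have keyB : ∀ v, v ∈ B → v ∉ U →
      G.neighborFinset v ∩ (S₁ ∪ S₂) = G₂.neighborFinset v ∩ S₂ := by
    intro v hvB hvU
    ext w
    simp only [Finset.mem_inter, SimpleGraph.mem_neighborFinset, Finset.mem_union, hG]
    constructor
    · rintro ⟨hadj, hw⟩
      have h2 : G₂.Adj v w := by
        rcases hadj with h | h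
        · exact absurd (hUsub v (hG₁ v w h).1 hvB) hvU
        · exact h
      refine ⟨h2, ?_⟩
      rcases hw with h | h
      · exact hS12 w h (hUsub w (hS₁A h) (hG₂ v w h2).2)
      · exact h
    · rintro ⟨h1, h2⟩; exact ⟨Or.inr h1, Or.inr h2⟩
  have hcases : ∀ v : V, v ∈ A ∨ v ∈ B := fun v => by
    have : v ∈ A ∪ B := by rw [hAB]; exact Finset.mem_univ v
    exact Finset.mem_union.mp this
  have memA : ∀ v, v ∈ A → v ∉ U → (v ∈ S₁ ∪ S₂ ↔ v ∈ S₁) := by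
    intro v hvA hvU
    constructor
    · intro h
      rcases Finset.mem_union.mp h with h | h
      · exact h
      · exact absurd (hUsub v hvA (hS₂B h)) hvU
    · exact fun h => Finset.mem_union.mpr (Or.inl h)
  have memB : ∀ v, v ∈ B → v ∉ U → (v ∈ S₁ ∪ S₂ ↔ v ∈ S₂) := by
    intro v hvB hvU
    constructor
    · intro h
      rcases Finset.mem_union.mp h with h | h
      · exact absurd (hUsub v (hS₁A h) hvB) hvU
      · exact h
    · exact fun h => Finset.mem_union.mpr (Or.inr h)
  constructor
  · constructor
    · intro v hv hvU
      rcases hcases v with hvA | hvB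
      · rw [keyA v hvA hvU]
        exact h₁.1 v ((memA v hvA hvU).mp hv) hvU
      · rw [keyB v hvB hvU]
        exact h₂.1 v ((memB v hvB hvU).mp hv) hvU
    · intro v hv hvU
      rcases hcases v with hvA | hvB
      · rw [keyA v hvA hvU]
        exact h₁.2 v (fun h => hv (Finset.mem_union.mpr (Or.inl h))) hvU
      · rw [keyB v hvB hvU]
        exact h₂.2 v (fun h => hv (Finset.mem_union.mpr (Or.inr h))) hvU
  · intro v hvU
    have hset : G.neighborFinset v ∩ (S₁ ∪ S₂) =
        (G₁.neighborFinset v ∩ S₁) ∪ (G₂.neighborFinset v ∩ S₂) := by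
      ext w
      simp only [Finset.mem_inter, SimpleGraph.mem_neighborFinset, Finset.mem_union, hG]
      constructor
      · rintro ⟨hadj, hw⟩
        rcases hadj with h | h
        · rcases hw with hw | hw
          · exact Or.inl ⟨h, hw⟩
          · exact Or.inl ⟨h, hS21 w hw (hUsub w (hG₁ v w h).2 (hS₂B hw))⟩
        · rcases hw with hw | hw
          · exact Or.inr ⟨h, hS12 w hw (hUsub w (hS₁A hw) (hG₂ v w h).2)⟩
          · exact Or.inr ⟨h, hw⟩
      · rintro (⟨h, hw⟩ | ⟨h, hw⟩)
        · exact ⟨Or.inl h, Or.inl hw⟩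
        · exact ⟨Or.inr h, Or.inr hw⟩
    have hdisj : Disjoint (G₁.neighborFinset v ∩ S₁) (G₂.neighborFinset v ∩ S₂) := by
      rw [Finset.disjoint_left]
      intro w hw1 hw2
      have h1 := Finset.mem_inter.mp hw1
      have h2 := Finset.mem_inter.mp hw2
      have hadj1 := (SimpleGraph.mem_neighborFinset _ v w).mp h1.1
      have hadj2 := (SimpleGraph.mem_neighborFinset _ v w).mp h2.1
      have hwU : w ∈ U := hUsub w (hG₁ v w hadj1).2 (hS₂B h2.2)
      exact hUindep v hvU w hwU hadj2
    rw [hset, Finset.card_union_of_disjoint hdisj]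
end
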